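/- arXiv:1607.07306 — 7 statements merged into one kernel-verified Lean document; each statement's English description precedes it below -/
import Mathlib

section
/- Let $X$ be a metric space, $n \geq 2$, and $S_1,\dots,S_n,D \in X$. Suppose that for each $2 \leq j \leq n$, $d(S_{j-1},S_j) + d(S_j,D) - d(S_{j-1},D) \leq \frac{d(S_j,D)}{j}$. Then for every $1 \leq i \leq n$ with $d(S_i,D) > 0$, the travel distance of passenger $i$, namely $\sum_{j=i}^{n-1} d(S_j,S_{j+1}) + d(S_n,D)$, is at most $2\sqrt{n}\cdot d(S_i,D)$. -/
/-!
Write `r k = d(S k, D)`. Together with the triangle inequality, the condition at `k + 1` gives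
`(2k + 1) r (k+1) ≤ 2(k + 1) r k`, and since `2(k + 1)√k ≤ (2k + 1)√(k + 1)` this propagates to
`r m √i ≤ r i √m` for `m ≥ i`. Telescoping the conditions bounds the travel distance by
`r i + ∑ r (k+1) / (k+1) ≤ r i + (r i / √i) ∑ 1 / √(k+1)`, and `1 / √(k+1) ≤ 2(√(k+1) - √k)`
sums to `2(√n - √i)`.
-/

open Finset Real

lemma two_mul_sqrt_mul_sqrt_succ_le {x : ℝ} (hx : 0 ≤ x) : 2 * (√x * √(x + 1)) ≤ 2 * x + 1 := by
  have := two_mul_le_add_sq √x √(x + 1)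
  rw [sq_sqrt hx, sq_sqrt (by linarith)] at this
  linarith

lemma inv_sqrt_succ_le {x : ℝ} (hx : 0 ≤ x) : (√(x + 1))⁻¹ ≤ 2 * (√(x + 1) - √x) := by
  have hpos : 0 < √(x + 1) := sqrt_pos.mpr (by linarith)
  have hsq : √(x + 1) * √(x + 1) = x + 1 := mul_self_sqrt (by linarith)
  rw [inv_le_iff_one_le_mul₀' hpos]
  nlinarith [two_mul_sqrt_mul_sqrt_succ_le hx]

lemma sum_Ico_inv_sqrt_succ_le {i n : ℕ} (hin : i ≤ n) :
    ∑ k ∈ Ico i n, (√((k : ℝ) + 1))⁻¹ ≤ 2 * (√n - √i) := by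
  calc ∑ k ∈ Ico i n, (√((k : ℝ) + 1))⁻¹
      ≤ ∑ k ∈ Ico i n, 2 * (√((k + 1 : ℕ) : ℝ) - √(k : ℝ)) :=
        sum_le_sum fun k _ => by exact_mod_cast inv_sqrt_succ_le k.cast_nonneg
    _ = 2 * (√n - √i) := by
        rw [← mul_sum, sum_Ico_sub (fun k : ℕ => √(k : ℝ)) hin]

lemma mul_sqrt_le_mul_sqrt_of_succ_le {r : ℕ → ℝ} {i n : ℕ} (hri : 0 ≤ r i)
    (hstep : ∀ k, i ≤ k → k < n → (2 * k + 1) * r (k + 1) ≤ 2 * (k + 1) * r k) :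
    ∀ m, i ≤ m → m ≤ n → r m * √i ≤ r i * √m := by
  intro m him hmn
  induction m, him using Nat.le_induction with
  | base => rw [mul_comm]
  | succ k hik ih =>
    have hk := ih (by omega)
    have hpos : (0 : ℝ) < 2 * k + 1 := by positivity
    have hsqrt : 2 * (k + 1) * √(k : ℝ) ≤ (2 * k + 1) * √((k : ℝ) + 1) := by
      have hamgm := two_mul_sqrt_mul_sqrt_succ_le (k.cast_nonneg (α := ℝ))
      calc 2 * (k + 1) * √(k : ℝ) = 2 * (√k * √((k : ℝ) + 1)) * √((k : ℝ) + 1) := by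
            linear_combination (-2 * √(k : ℝ)) * mul_self_sqrt (by positivity : (0 : ℝ) ≤ k + 1)
        _ ≤ (2 * k + 1) * √((k : ℝ) + 1) := by gcongr
    refine le_of_mul_le_mul_left ?_ hpos
    push_cast
    calc (2 * k + 1) * (r (k + 1) * √i)
        ≤ 2 * (k + 1) * r k * √i := by
          nlinarith [hstep k hik (by omega), sqrt_nonneg (i : ℝ)]
      _ ≤ 2 * (k + 1) * (r i * √k) := by nlinarith
      _ ≤ (2 * k + 1) * (r i * √((k : ℝ) + 1)) := by nlinarith

lemma sum_add_le_add_sum_div {d r : ℕ → ℝ} {i n : ℕ} (hin : i ≤ n)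
    (hsir : ∀ k ∈ Ico i n, d k + r (k + 1) - r k ≤ r (k + 1) / (k + 1)) :
    ∑ k ∈ Ico i n, d k + r n ≤ r i + ∑ k ∈ Ico i n, r (k + 1) / (k + 1) := by
  have hsum := sum_le_sum hsir
  simp only [add_sub_assoc] at hsum
  rw [sum_add_distrib, sum_Ico_sub r hin] at hsum
  linarith

lemma sum_add_le_two_mul_sqrt_mul {d r : ℕ → ℝ} {i n : ℕ} (hi : 1 ≤ i) (hin : i ≤ n)
    (hri : 0 ≤ r i) (htri : ∀ k ∈ Ico i n, r (k + 1) ≤ d k + r k)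
    (hsir : ∀ k ∈ Ico i n, d k + r (k + 1) - r k ≤ r (k + 1) / (k + 1)) :
    ∑ k ∈ Ico i n, d k + r n ≤ 2 * √n * r i := by
  have hsqrt_i : 1 ≤ √(i : ℝ) := one_le_sqrt.mpr (by exact_mod_cast hi)
  have hgrowth := mul_sqrt_le_mul_sqrt_of_succ_le (n := n) hri fun k hik hkn => by
    have hk := hsir k (mem_Ico.mpr ⟨hik, hkn⟩)
    have ht := htri k (mem_Ico.mpr ⟨hik, hkn⟩)
    have hk1 : (0 : ℝ) < k + 1 := by positivity
    rw [le_div_iff₀ hk1] at hk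
    nlinarith
  have hterm : ∀ k ∈ Ico i n, r (k + 1) / (k + 1) ≤ r i / √i * (√((k : ℝ) + 1))⁻¹ := by
    intro k hk
    have hk := mem_Ico.mp hk
    have hgrowth_k := hgrowth (k + 1) (by omega) (by omega)
    push_cast at hgrowth_k
    set s := √((k : ℝ) + 1)
    have hs : 0 < s := sqrt_pos.mpr (by positivity)
    have hsq : s * s = k + 1 := mul_self_sqrt (by positivity)
    rw [← hsq]
    field_simp
    linarith
  have hri' : 0 ≤ r i / √i := div_nonneg hri (sqrt_nonneg _)
  calc ∑ k ∈ Ico i n, d k + r n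
      ≤ r i + ∑ k ∈ Ico i n, r (k + 1) / (k + 1) := sum_add_le_add_sum_div hin hsir
    _ ≤ r i + r i / √i * ∑ k ∈ Ico i n, (√((k : ℝ) + 1))⁻¹ := by
        rw [mul_sum]; gcongr with k hk; exact hterm k hk
    _ ≤ r i + r i / √i * (2 * (√n - √i)) := by gcongr; exact sum_Ico_inv_sqrt_succ_le hin
    _ ≤ 2 * √n * r i := by
        have hq : r i / √i ≤ r i := div_le_self hri hsqrt_i
        have hqi : r i / √i * √i = r i := div_mul_cancel₀ _ (by positivity)
        nlinarith [mul_le_mul_of_nonneg_right hq (sqrt_nonneg n)]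

theorem stmt6_general {X : Type*} [MetricSpace X] (n : ℕ)
    (S : ℕ → X) (D : X)
    (h : ∀ j, 2 ≤ j → j ≤ n →
      dist (S (j-1)) (S j) + dist (S j) D - dist (S (j-1)) D ≤ dist (S j) D / j) :
    ∀ i, 1 ≤ i → i ≤ n → 0 < dist (S i) D →
      (∑ j ∈ Finset.Ico i n, dist (S j) (S (j+1))) + dist (S n) D
        ≤ 2 * Real.sqrt n * dist (S i) D := by
  intro i hi hin _
  refine sum_add_le_two_mul_sqrt_mul (d := fun k => dist (S k) (S (k + 1)))
    (r := fun k => dist (S k) D) hi hin dist_nonneg (fun k _ => ?_) (fun k hk => ?_)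
  · exact dist_triangle_left (S (k + 1)) D (S k)
  · have hk := mem_Ico.mp hk
    simpa using h (k + 1) (by omega) (by omega)

theorem stmt6 {X : Type*} [MetricSpace X] (n : ℕ) (hn : 2 ≤ n)
    (S : ℕ → X) (D : X)
    (h : ∀ j, 2 ≤ j → j ≤ n →
      dist (S (j-1)) (S j) + dist (S j) D - dist (S (j-1)) D ≤ dist (S j) D / j) :
    ∀ i, 1 ≤ i → i ≤ n → 0 < dist (S i) D →
      (∑ j ∈ Finset.Ico i n, dist (S j) (S (j+1))) + dist (S n) D
        ≤ 2 * Real.sqrt n * dist (S i) D :=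
  stmt6_general n S D h
end

section
/- Let $X$ be a metric space, $n \geq 2$, and $S_1,\dots,S_n,D \in X$. Suppose that for each $2 \leq j \leq n$, $d(S_{j-1},S_j) + d(S_j,D) - d(S_{j-1},D) \leq d(S_j,D)$. Then for every $1 \leq i \leq n$, $\sum_{j=i}^{n-1} d(S_j,S_{j+1}) + d(S_n,D) \leq 2^{n-i+1}\, d(S_i,D)$; in particular this quantity is at most $2^n \, d(S_i,D)$ for every $i$. -/
/-!
If every step of the path `S₀, S₁, …, Sₘ` is no longer than the distance from its start to `D`,
then `d(Sⱼ₊₁, D) ≤ 2 d(Sⱼ, D)` by the triangle inequality. Peeling off the first step, the length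
of the path followed by the jump to `D` is at most `d(S₀, D) + (2ᵐ - 1) d(S₁, D) ≤ (2ᵐ⁺¹ - 1) d(S₀, D)`.
-/

open Finset

section PseudoMetric

variable {X : Type*} [PseudoMetricSpace X]

theorem dist_le_two_mul_of_dist_le {x y z : X} (h : dist x y ≤ dist x z) :
    dist y z ≤ 2 * dist x z := by
  linarith [dist_triangle_left y z x, dist_comm x y]

theorem sum_dist_add_dist_le_of_dist_succ_le (D : X) :
    ∀ (m : ℕ) (S : ℕ → X), (∀ j < m, dist (S j) (S (j + 1)) ≤ dist (S j) D) →
      ∑ j ∈ range m, dist (S j) (S (j + 1)) + dist (S m) D ≤ (2 ^ (m + 1) - 1) * dist (S 0) D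
  | 0, S, _ => by norm_num
  | m + 1, S, hS => by
    have ih := sum_dist_add_dist_le_of_dist_succ_le D m (fun j => S (j + 1))
      fun j hj => hS (j + 1) (by omega)
    have hfirst : dist (S 0) (S 1) ≤ dist (S 0) D := hS 0 (by omega)
    have hnext : dist (S 1) D ≤ 2 * dist (S 0) D := dist_le_two_mul_of_dist_le hfirst
    have hcoeff : (0 : ℝ) ≤ 2 ^ (m + 1) - 1 := by
      linarith [one_le_pow₀ (M₀ := ℝ) (a := 2) (n := m + 1) (by norm_num)]
    rw [sum_range_succ']
    calc ∑ j ∈ range m, dist (S (j + 1)) (S (j + 1 + 1)) + dist (S 0) (S 1) + dist (S (m + 1)) D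
        ≤ dist (S 0) D + (2 ^ (m + 1) - 1) * dist (S 1) D := by linarith
      _ ≤ dist (S 0) D + (2 ^ (m + 1) - 1) * (2 * dist (S 0) D) := by gcongr
      _ = (2 ^ (m + 1 + 1) - 1) * dist (S 0) D := by ring

end PseudoMetric

theorem stmt8_general {X : Type*} [MetricSpace X] (n : ℕ)
    (S : ℕ → X) (D : X)
    (h : ∀ j, 2 ≤ j → j ≤ n →
      dist (S (j-1)) (S j) + dist (S j) D - dist (S (j-1)) D ≤ dist (S j) D) :
    ∀ i, 1 ≤ i → i ≤ n →
      (∑ j ∈ Finset.Ico i n, dist (S j) (S (j+1))) + dist (S n) D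
        ≤ 2 ^ (n - i + 1) * dist (S i) D ∧
      (∑ j ∈ Finset.Ico i n, dist (S j) (S (j+1))) + dist (S n) D
        ≤ 2 ^ n * dist (S i) D := by
  intro i hi hin
  have hstep : ∀ j < n - i, dist (S (i + j)) (S (i + j + 1)) ≤ dist (S (i + j)) D := by
    intro j hj
    have := h (i + j + 1) (by omega) (by omega)
    simp only [Nat.add_sub_cancel] at this
    linarith
  have hbound : (∑ j ∈ Ico i n, dist (S j) (S (j + 1))) + dist (S n) D
      ≤ (2 ^ (n - i + 1) - 1) * dist (S i) D := by
    rw [sum_Ico_eq_sum_range]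
    simpa [Nat.add_sub_cancel' hin, add_assoc] using
      sum_dist_add_dist_le_of_dist_succ_le D (n - i) (fun j => S (i + j)) hstep
  have hpow : (2 : ℝ) ^ (n - i + 1) ≤ 2 ^ n := pow_le_pow_right₀ (by norm_num) (by omega)
  have hdist : 0 ≤ dist (S i) D := dist_nonneg
  constructor <;> nlinarith

theorem stmt8 {X : Type*} [MetricSpace X] (n : ℕ) (hn : 2 ≤ n)
    (S : ℕ → X) (D : X)
    (h : ∀ j, 2 ≤ j → j ≤ n →
      dist (S (j-1)) (S j) + dist (S j) D - dist (S (j-1)) D ≤ dist (S j) D) :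
    ∀ i, 1 ≤ i → i ≤ n →
      (∑ j ∈ Finset.Ico i n, dist (S j) (S (j+1))) + dist (S n) D
        ≤ 2 ^ (n - i + 1) * dist (S i) D ∧
      (∑ j ∈ Finset.Ico i n, dist (S j) (S (j+1))) + dist (S n) D
        ≤ 2 ^ n * dist (S i) D :=
  stmt8_general n S D h
end

section
/- Let $n \geq 1$, let $\alpha_{op} > 0$ and $\alpha_1,\dots,\alpha_n \geq 0$, and define $z_j = \big(1 + \frac{1}{\alpha_{op}}\sum_{k=1}^{j-1}\alpha_k\big)^{-1}$ for $1 \leq j \leq n$. Then $z_1 = 1$, the sequence $(z_j)$ is nonincreasing (strictly decreasing if all $\alpha_k > 0$), and for any $\ell > 0$, setting $d(S_j,D) = \ell$ for all $j$ and $d(S_{j-1},S_j) = z_j \ell$ for $2 \leq j \leq n$, the SIR-feasibility constraint $d(S_{j-1},S_j) + d(S_j,D) - d(S_{j-1},D) \leq z_j\, d(S_j,D)$ holds with equality for each $2 \leq j \leq n$, and the resulting starvation factor of the first passenger equals $\sum_{j=1}^{n} z_j$. -/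
/-! The weights `z j = (1 + A_{j-1}/αop)⁻¹` are reciprocals of affine functions of the
nonnegative partial sums `A_{j-1} = α 1 + ⋯ + α (j-1)`, which grow with `j` (strictly, if
every `α k > 0`); hence `z` is nonincreasing. On the instance the first passenger travels
`ℓ + ∑_{j ≥ 2} z j ℓ`, i.e. `z 1 + ∑_{j ≥ 2} z j` times the direct distance `ℓ`. -/

open Finset

lemma Finset.sum_Icc_one_eq_sum_Icc_pred_add {M : Type*} [AddCommMonoid M] (f : ℕ → M) {j : ℕ}
    (hj : 1 ≤ j) : ∑ k ∈ Icc 1 j, f k = ∑ k ∈ Icc 1 (j - 1), f k + f j := by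
  obtain ⟨m, rfl⟩ := Nat.exists_eq_add_of_le' hj
  simpa using sum_Icc_succ_top (Nat.le_add_left 1 m) f

lemma Finset.sum_Icc_one_eq_add_sum_Icc_two {M : Type*} [AddCommMonoid M] (f : ℕ → M) {n : ℕ}
    (hn : 1 ≤ n) : ∑ k ∈ Icc 1 n, f k = f 1 + ∑ k ∈ Icc 2 n, f k := by
  rw [← add_sum_Ioc_eq_sum_Icc hn, ← Icc_add_one_left_eq_Ioc]
  rfl

section OrderedField

variable {K : Type*} [Field K] [LinearOrder K] [IsStrictOrderedRing K] {c s t : K}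

lemma inv_one_add_mul_le_inv_one_add_mul (hc : 0 ≤ c) (hs : 0 ≤ s) (hst : s ≤ t) :
    (1 + c * t)⁻¹ ≤ (1 + c * s)⁻¹ := by
  have : 0 < 1 + c * s := by positivity
  gcongr

lemma inv_one_add_mul_lt_inv_one_add_mul (hc : 0 < c) (hs : 0 ≤ s) (hst : s < t) :
    (1 + c * t)⁻¹ < (1 + c * s)⁻¹ := by
  have : 0 < 1 + c * s := by positivity
  gcongr

end OrderedField

theorem stmt10 (n : ℕ) (hn : 1 ≤ n) (αop : ℝ) (hαop : 0 < αop)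
    (α : ℕ → ℝ) (hα : ∀ k, 1 ≤ k → k ≤ n → 0 ≤ α k)
    (z : ℕ → ℝ)
    (hz : ∀ j, z j = (1 + (1 / αop) * ∑ k ∈ Finset.Icc 1 (j-1), α k)⁻¹) :
    z 1 = 1 ∧
    (∀ j, 1 ≤ j → j < n → z (j+1) ≤ z j) ∧
    ((∀ k, 1 ≤ k → k ≤ n → 0 < α k) → ∀ j, 1 ≤ j → j < n → z (j+1) < z j) ∧
    (∀ ℓ : ℝ, 0 < ℓ →
      (∀ j, 2 ≤ j → j ≤ n → z j * ℓ + ℓ - ℓ = z j * ℓ) ∧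
      ((∑ j ∈ Finset.Icc 2 n, z j * ℓ) + ℓ) / ℓ = ∑ j ∈ Finset.Icc 1 n, z j) := by
  have hc : 0 < 1 / αop := one_div_pos.mpr hαop
  have hA : ∀ j < n, 0 ≤ ∑ k ∈ Icc 1 (j - 1), α k := fun j hj =>
    sum_nonneg fun k hk => hα k (mem_Icc.1 hk).1 ((mem_Icc.1 hk).2.trans (by omega))
  have hz_succ : ∀ j, 1 ≤ j →
      z (j + 1) = (1 + 1 / αop * (∑ k ∈ Icc 1 (j - 1), α k + α j))⁻¹ := fun j hj => by
    rw [hz, Nat.add_sub_cancel, sum_Icc_one_eq_sum_Icc_pred_add α hj]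
  have hz_one : z 1 = 1 := by simp [hz]
  refine ⟨hz_one, fun j hj hjn => ?_, fun hpos j hj hjn => ?_,
    fun ℓ hℓ => ⟨fun j _ _ => add_sub_cancel_right _ _, ?_⟩⟩
  · rw [hz_succ j hj, hz j]
    exact inv_one_add_mul_le_inv_one_add_mul hc.le (hA j hjn)
      (le_add_of_nonneg_right (hα j hj hjn.le))
  · rw [hz_succ j hj, hz j]
    exact inv_one_add_mul_lt_inv_one_add_mul hc (hA j hjn)
      (lt_add_of_pos_right _ (hpos j hj hjn.le))
  · rw [sum_Icc_one_eq_add_sum_Icc_two z hn, hz_one, ← sum_mul, ← add_one_mul,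
      mul_div_cancel_right₀ _ hℓ.ne', add_comm]
end

section
/- Let $n \geq 1$ and let $\mathcal{OC}: \{1,\dots,n\} \to \mathbb{R}$ and $\mathcal{IC}_i : \{i,\dots,n\} \to \mathbb{R}$ be given functions (where $\mathcal{IC}_i(j)$ is the cost incurred by passenger $i$ when $j$ passengers ride together, and $\mathcal{OC}(j)$ is the operating cost with $j$ passengers), and let $d_j > 0$ be the solo cost for passenger $j$, with $\mathcal{IC}_j(j)$ well-defined, and suppose $\mathcal{OC}(1) = d_1$. Suppose that for every $2 \leq j \leq n$: $\big(\mathcal{OC}(j)-\mathcal{OC}(j-1)\big) + \sum_{i=1}^{j-1}\big(\mathcal{IC}_i(j) - \mathcal{IC}_i(j-1)\big) \leq d_j - \mathcal{IC}_j(j)$. Then there exists a family of payments $f(i,j) \in \mathbb{R}$ for $1 \leq i \leq j \leq n$ such that: (a) budget balance: $\sum_{i=1}^{j} f(i,j) = \mathcal{OC}(j)$ for all $j$, in particular $f(1,1) = \mathcal{OC}(1)$; (b) for all $2 \leq j \leq n$ and $1 \leq i \leq j-1$: $f(i,j) + \mathcal{IC}_i(j) \leq f(i,j-1) + \mathcal{IC}_i(j-1)$;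 and (c) for all $2 \leq j \leq n$: $f(j,j) + \mathcal{IC}_j(j) \leq d_j$. -/
noncomputable def gpay (OC : ℕ → ℝ) (IC : ℕ → ℕ → ℝ) : ℕ → ℝ
  | i => OC i - ∑ k ∈ (Finset.Icc 1 (i-1)).attach,
      (gpay OC IC k.1 + IC k.1 k.1 - IC k.1 i)
decreasing_by
  have := Finset.mem_Icc.mp k.2; omega

lemma gpay_def (OC : ℕ → ℝ) (IC : ℕ → ℕ → ℝ) (i : ℕ) :
    gpay OC IC i = OC i - ∑ k ∈ Finset.Icc 1 (i-1),
      (gpay OC IC k + IC k k - IC k i) := by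
  rw [gpay, ← Finset.sum_attach (Finset.Icc 1 (i-1))
    (fun k => gpay OC IC k + IC k k - IC k i)]

lemma gpay_sum (OC : ℕ → ℝ) (IC : ℕ → ℕ → ℝ) (j : ℕ) (hj : 1 ≤ j) :
    ∑ i ∈ Finset.Icc 1 j, (gpay OC IC i + IC i i - IC i j) = OC j := by
  obtain ⟨m, rfl⟩ : ∃ m, j = m + 1 := ⟨j - 1, by omega⟩
  rw [Finset.sum_Icc_succ_top (by omega : 1 ≤ m + 1)]
  have := gpay_def OC IC (m+1)
  simp only [Nat.add_sub_cancel] at this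
  rw [show (∑ i ∈ Finset.Icc 1 m, (gpay OC IC i + IC i i - IC i (m+1)))
      = OC (m+1) - gpay OC IC (m+1) by linarith]
  ring

theorem stmt11 (n : ℕ) (hn : 1 ≤ n)
    (OC : ℕ → ℝ) (IC : ℕ → ℕ → ℝ) (d : ℕ → ℝ)
    (hd : ∀ j, 1 ≤ j → j ≤ n → 0 < d j)
    (hOC1 : OC 1 = d 1)
    (h : ∀ j, 2 ≤ j → j ≤ n →
      (OC j - OC (j-1)) + (∑ i ∈ Finset.Icc 1 (j-1), (IC i j - IC i (j-1)))
        ≤ d j - IC j j) :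
    ∃ f : ℕ → ℕ → ℝ,
      (∀ j, 1 ≤ j → j ≤ n → ∑ i ∈ Finset.Icc 1 j, f i j = OC j) ∧
      f 1 1 = OC 1 ∧
      (∀ j, 2 ≤ j → j ≤ n → ∀ i, 1 ≤ i → i ≤ j - 1 →
        f i j + IC i j ≤ f i (j-1) + IC i (j-1)) ∧
      (∀ j, 2 ≤ j → j ≤ n → f j j + IC j j ≤ d j) := by
  refine ⟨fun i j => gpay OC IC i + IC i i - IC i j, ?_, ?_, ?_, ?_⟩
  · intro j hj _; exact gpay_sum OC IC j hj
  · have := gpay_def OC IC 1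
    simp at this
    simp [this]
  · intro j _ _ i _ _; exact le_of_eq (by ring)
  · intro j hj hjn
    have hdef := gpay_def OC IC j
    have hbal := gpay_sum OC IC (j-1) (by omega)
    have hsum : ∑ k ∈ Finset.Icc 1 (j-1), (gpay OC IC k + IC k k - IC k j)
        = OC (j-1) - ∑ k ∈ Finset.Icc 1 (j-1), (IC k j - IC k (j-1)) := by
      rw [← hbal, ← Finset.sum_sub_distrib]
      apply Finset.sum_congr rfl
      intro k _; ring
    have hh := h j hj hjn
    have : gpay OC IC j = OC j - OC (j-1)
        + ∑ k ∈ Finset.Icc 1 (j-1), (IC k j - IC k (j-1)) := by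
      rw [hdef, hsum]; ring
    simp only [this] at *
    linarith
end

section
/- Let $n \geq 1$, $\mathcal{OC}: \{1,\dots,n\}\to\mathbb{R}$, $\mathcal{IC}_i:\{i,\dots,n\}\to\mathbb{R}$, and $d_j \in \mathbb{R}$ with $\mathcal{OC}(1) = d_1$ (after normalization). Suppose there exist payments $f(i,j)$ for $1 \leq i \leq j \leq n$ satisfying budget balance $\sum_{i=1}^{j} f(i,j) = \mathcal{OC}(j)$, the solo condition $f(j,j)$ when $j$ is alone equals $d_j$, the monotonicity $f(i,j) + \mathcal{IC}_i(j) \leq f(i,j-1) + \mathcal{IC}_i(j-1)$ for $i < j$, and $f(j,j) + \mathcal{IC}_j(j) \leq d_j$ for the joining passenger $j$. Then for every $2 \leq j \leq n$: $\big(\mathcal{OC}(j)-\mathcal{OC}(j-1)\big) + \sum_{i=1}^{j-1}\big(\mathcal{IC}_i(j) - \mathcal{IC}_i(j-1)\big) + \mathcal{IC}_j(j) \leq d_j$. -/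
/-! Summing the incumbents' monotonicity constraints at step `j` and adding the joining
passenger's constraint bounds the total change of payments plus inconvenience costs by `d j`;
by budget balance the total change of payments is `OC j - OC (j-1)`. -/

open Finset

theorem sum_sub_add_le_of_sum_eq_of_le {ι : Type*} (s : Finset ι)
    (fOld fNew ICOld ICNew : ι → ℝ) (fJoin ICJoin d OCOld OCNew : ℝ)
    (hOld : ∑ i ∈ s, fOld i = OCOld) (hNew : ∑ i ∈ s, fNew i + fJoin = OCNew)
    (hmono : ∀ i ∈ s, fNew i + ICNew i ≤ fOld i + ICOld i) (hjoin : fJoin + ICJoin ≤ d) :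
    (OCNew - OCOld) + ∑ i ∈ s, (ICNew i - ICOld i) + ICJoin ≤ d := by
  have hsum := sum_le_sum hmono
  simp only [sum_add_distrib, sum_sub_distrib] at hsum ⊢
  linarith

theorem stmt12_general (n : ℕ)
    (OC : ℕ → ℝ) (IC : ℕ → ℕ → ℝ) (d : ℕ → ℝ)
    (f : ℕ → ℕ → ℝ)
    (hBB : ∀ j, 1 ≤ j → j ≤ n → ∑ i ∈ Finset.Icc 1 j, f i j = OC j)
    (hmono : ∀ j, 2 ≤ j → j ≤ n → ∀ i, 1 ≤ i → i ≤ j - 1 →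
      f i j + IC i j ≤ f i (j-1) + IC i (j-1))
    (hjoin : ∀ j, 2 ≤ j → j ≤ n → f j j + IC j j ≤ d j) :
    ∀ j, 2 ≤ j → j ≤ n →
      (OC j - OC (j-1)) + (∑ i ∈ Finset.Icc 1 (j-1), (IC i j - IC i (j-1))) + IC j j
        ≤ d j := by
  intro j hj2 hjn
  obtain ⟨m, rfl⟩ : ∃ m, j = m + 1 := ⟨j - 1, by omega⟩
  rw [Nat.add_sub_cancel]
  apply sum_sub_add_le_of_sum_eq_of_le (Icc 1 m) (f · m) (f · (m + 1)) (IC · m) (IC · (m + 1))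
  · exact hBB m (by omega) (by omega)
  · rw [← sum_Icc_succ_top (by omega)]
    exact hBB (m + 1) (by omega) hjn
  · intro i hi
    rw [mem_Icc] at hi
    simpa using hmono (m + 1) hj2 hjn i hi.1 (by simpa using hi.2)
  · exact hjoin (m + 1) hj2 hjn

theorem stmt12 (n : ℕ) (hn : 1 ≤ n)
    (OC : ℕ → ℝ) (IC : ℕ → ℕ → ℝ) (d : ℕ → ℝ)
    (hOC1 : OC 1 = d 1)
    (f : ℕ → ℕ → ℝ)
    (hBB : ∀ j, 1 ≤ j → j ≤ n → ∑ i ∈ Finset.Icc 1 j, f i j = OC j)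
    (hsolo : f 1 1 = d 1)
    (hmono : ∀ j, 2 ≤ j → j ≤ n → ∀ i, 1 ≤ i → i ≤ j - 1 →
      f i j + IC i j ≤ f i (j-1) + IC i (j-1))
    (hjoin : ∀ j, 2 ≤ j → j ≤ n → f j j + IC j j ≤ d j) :
    ∀ j, 2 ≤ j → j ≤ n →
      (OC j - OC (j-1)) + (∑ i ∈ Finset.Icc 1 (j-1), (IC i j - IC i (j-1))) + IC j j
        ≤ d j :=
  stmt12_general n OC IC d f hBB hmono hjoin
end

section
/- Let $n \geq 2$, let $P_1,\dots,P_n$ be points with pairwise distances from a metric space, let $L > n \cdot \max_{1 \leq i < j \leq n} d(P_i,P_j)$, and extend the metric by a point $D$ with $d(P_i,D) = L$ for all $i$. Then: (a) the extended distance satisfies the triangle inequality; and (b) for every permutation $(S_1,\dots,S_n)$ of the points, the constraints $d(S_{j-1},S_j) + d(S_j,D) - d(S_{j-1},D) \leq \frac{d(S_j,D)}{j}$ hold for all $2 \leq j \leq n$, i.e., every route is SIR-feasible. -/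
theorem stmt18 {X : Type*} [MetricSpace X] (n : ℕ) (hn : 2 ≤ n)
    (P : ℕ → X) (L : ℝ)
    (hL : ∀ i j, 1 ≤ i → i < j → j ≤ n → n * dist (P i) (P j) < L)
    (dd : ℕ → ℕ → ℝ)
    (hdd0 : dd 0 0 = 0)
    (hddL : ∀ i, 1 ≤ i → i ≤ n → dd i 0 = L ∧ dd 0 i = L)
    (hddP : ∀ i j, 1 ≤ i → i ≤ n → 1 ≤ j → j ≤ n → dd i j = dist (P i) (P j)) :
    (∀ x y z, x ≤ n → y ≤ n → z ≤ n → dd x z ≤ dd x y + dd y z) ∧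
    (∀ S : ℕ → ℕ, Set.BijOn S (Set.Icc 1 n) (Set.Icc 1 n) →
      ∀ j, 2 ≤ j → j ≤ n →
        dd (S (j-1)) (S j) + dd (S j) 0 - dd (S (j-1)) 0 ≤ dd (S j) 0 / j) := by
  have hLpos : 0 < L := by
    have h := hL 1 2 le_rfl one_lt_two hn
    have : (0:ℝ) ≤ n * dist (P 1) (P 2) := by positivity
    linarith
  have hdlt : ∀ i j, 1 ≤ i → i ≤ n → 1 ≤ j → j ≤ n →
      (n:ℝ) * dist (P i) (P j) < L := by
    intro i j hi hin hj hjn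
    rcases lt_trichotomy i j with h | h | h
    · exact hL i j hi h hjn
    · subst h; simp [hLpos]
    · rw [dist_comm]; exact hL j i hj h hin
  have hdle : ∀ i j, 1 ≤ i → i ≤ n → 1 ≤ j → j ≤ n →
      dist (P i) (P j) ≤ L := by
    intro i j hi hin hj hjn
    have h := hdlt i j hi hin hj hjn
    have h0 : (0:ℝ) ≤ dist (P i) (P j) := dist_nonneg
    have hn1 : (1:ℝ) ≤ n := by exact_mod_cast Nat.one_le_of_lt hn
    nlinarith
  constructor
  · intro x y z hx hy hz
    rcases Nat.eq_zero_or_pos x with hx0 | hx1 <;>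
      rcases Nat.eq_zero_or_pos y with hy0 | hy1 <;>
        rcases Nat.eq_zero_or_pos z with hz0 | hz1
    · subst hx0; subst hy0; subst hz0; simp [hdd0]
    · subst hx0; subst hy0
      simp [hdd0, (hddL z hz1 hz).2]
    · subst hx0; subst hz0
      simp [hdd0]
      have := (hddL y hy1 hy).1
      have := (hddL y hy1 hy).2
      linarith
    · subst hx0
      rw [(hddL z hz1 hz).2, (hddL y hy1 hy).2, hddP y z hy1 hy hz1 hz]
      have := dist_nonneg (x := P y) (y := P z)
      linarith
    · subst hy0; subst hz0
      simp [hdd0, (hddL x hx1 hx).1]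
    · subst hy0
      rw [hddP x z hx1 hx hz1 hz, (hddL x hx1 hx).1, (hddL z hz1 hz).2]
      have := hdle x z hx1 hx hz1 hz
      linarith
    · subst hz0
      rw [(hddL x hx1 hx).1, (hddL y hy1 hy).1, hddP x y hx1 hx hy1 hy]
      have := dist_nonneg (x := P x) (y := P y)
      linarith
    · rw [hddP x z hx1 hx hz1 hz, hddP x y hx1 hx hy1 hy, hddP y z hy1 hy hz1 hz]
      exact dist_triangle _ _ _
  · intro S hS j hj2 hjn
    have hjm : j - 1 ∈ Set.Icc 1 n := ⟨Nat.le_sub_one_of_lt hj2, le_trans (Nat.sub_le _ _) hjn⟩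
    have hjj : j ∈ Set.Icc 1 n := ⟨le_trans one_le_two hj2, hjn⟩
    obtain ⟨ha1, ha2⟩ := hS.mapsTo hjm
    obtain ⟨hb1, hb2⟩ := hS.mapsTo hjj
    rw [(hddL _ hb1 hb2).1, (hddL _ ha1 ha2).1,
      hddP _ _ ha1 ha2 hb1 hb2]
    have hlt := hdlt _ _ ha1 ha2 hb1 hb2
    have hjpos : (0:ℝ) < j := by positivity
    have hd0 : (0:ℝ) ≤ dist (P (S (j-1))) (P (S j)) := dist_nonneg
    have hjln : (j:ℝ) ≤ n := by exact_mod_cast hjn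
    have : (j:ℝ) * dist (P (S (j-1))) (P (S j)) < L := by nlinarith
    have : dist (P (S (j-1))) (P (S j)) ≤ L / j := by
      rw [le_div_iff₀ hjpos]; nlinarith
    linarith
end

section
/- For real sequences, suppose $a_j \leq \frac{2\sqrt{j}}{C}\, a_i$ for all $i \leq j \leq n$ where $C > 0$ and $a_i > 0$, and suppose $T + a_n - a_i \leq \sum_{j=i}^{n} \frac{a_j}{j}$ where $T = \sum_{j=i}^{n-1} b_j \geq 0$. Then $T + a_n \leq \Big(1 + \frac{2}{C}\sum_{j=i}^{n}\frac{1}{\sqrt{j}}\Big) a_i$. -/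
open Finset Real

theorem sum_div_le_mul_sum_inv_sqrt_mul {s : Finset ℕ} {a : ℕ → ℝ} {c M : ℝ}
    (h : ∀ j ∈ s, a j ≤ c * √j * M) :
    ∑ j ∈ s, a j / j ≤ c * (∑ j ∈ s, 1 / √j) * M := by
  rw [mul_sum, sum_mul]
  gcongr with j hj
  calc a j / j ≤ c * √j * M / j := by gcongr; exact h j hj
    _ = c * (√j / j) * M := by ring
    _ = c * (1 / √j) * M := by rw [sqrt_div_self']

theorem stmt19_general (n i : ℕ)
    (a b : ℕ → ℝ) (C : ℝ)
    (h1 : ∀ j, i ≤ j → j ≤ n → a j ≤ (2 * Real.sqrt j / C) * a i)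
    (h2 : (∑ j ∈ Finset.Ico i n, b j) + a n - a i ≤ ∑ j ∈ Finset.Icc i n, a j / j) :
    (∑ j ∈ Finset.Ico i n, b j) + a n
      ≤ (1 + (2 / C) * ∑ j ∈ Finset.Icc i n, 1 / Real.sqrt j) * a i := by
  have hle : ∀ j ∈ Icc i n, a j ≤ 2 / C * √j * a i := fun j hj => by
    rw [← mul_div_right_comm]
    exact h1 j (mem_Icc.1 hj).1 (mem_Icc.1 hj).2
  have hsum := sum_div_le_mul_sum_inv_sqrt_mul hle
  linarith

theorem stmt19 (n i : ℕ) (hi : 1 ≤ i) (hin : i ≤ n)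
    (a b : ℕ → ℝ) (C : ℝ) (hC : 0 < C) (ha : 0 < a i)
    (h1 : ∀ j, i ≤ j → j ≤ n → a j ≤ (2 * Real.sqrt j / C) * a i)
    (hT : 0 ≤ ∑ j ∈ Finset.Ico i n, b j)
    (h2 : (∑ j ∈ Finset.Ico i n, b j) + a n - a i ≤ ∑ j ∈ Finset.Icc i n, a j / j) :
    (∑ j ∈ Finset.Ico i n, b j) + a n
      ≤ (1 + (2 / C) * ∑ j ∈ Finset.Icc i n, 1 / Real.sqrt j) * a i :=
  stmt19_general n i a b C h1 h2
end
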